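/- arXiv:1106.0695 — 2 statements merged into one kernel-verified Lean document; each statement's English description precedes it below -/
import Mathlib

section
/- Differential type and typical differential dimension are differential birational invariants: if a and b are finite tuples from L that generate the same differential subfield over K (that is, K⟨a⟩ = K⟨b⟩), and p, q are Kolchin polynomials of a and of b over K respectively, then deg p = deg q and leadingCoeff(p) = leadingCoeff(q). -/
open Polynomial

/-- Iterated application of the derivations `δ` according to the multi-exponent `e`:
`x ↦ δ₁^[e 1] (δ₂^[e 2] (⋯ (δ_m^[e m] x)))`. -/
def thetaApply {L : Type*} {m : ℕ} (δ : Fin m → L → L) (e : Fin m → ℕ) : L → L :=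
  (List.ofFn (fun i => (δ i)^[e i])).foldr (· ∘ ·) id

/-- A subfield of `L` is a differential subfield if it is closed under each derivation. -/
def IsDiffSubfield {L : Type*} [Field L] {m : ℕ} (δ : Fin m → L → L) (K : Subfield L) : Prop :=
  ∀ i : Fin m, ∀ x ∈ K, δ i x ∈ K

/-- The transcendence degree (as a natural number) of an intermediate field over the base. -/
noncomputable def trdegNat {L : Type*} [Field L] (K : Subfield L) (E : IntermediateField K L) : ℕ :=
  (⨆ s : {s : Set E // AlgebraicIndependent K ((↑) : s → E)}, Cardinal.mk s.1).toNat

/-- `T_{η/K}(s)`: the transcendence degree over `K` of the subfield of `L` generated by `K`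
together with all `δ₁^(e 1) ⋯ δ_m^(e m) (η j)` with `e 1 + ⋯ + e m ≤ s`. -/
noncomputable def diffTrdeg {L : Type*} [Field L] {m n : ℕ} (δ : Fin m → L → L) (K : Subfield L)
    (η : Fin n → L) (s : ℕ) : ℕ :=
  trdegNat K (IntermediateField.adjoin K
    {x : L | ∃ e : Fin m → ℕ, (∑ i, e i) ≤ s ∧ ∃ j : Fin n, x = thetaApply δ e (η j)})

/-- `p` is a Kolchin polynomial of `η` over `K` if `p(s) = T_{η/K}(s)` for all large `s`. -/
def IsKolchinPoly {L : Type*} [Field L] {m n : ℕ} (δ : Fin m → L → L) (K : Subfield L)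
    (η : Fin n → L) (p : ℚ[X]) : Prop :=
  ∃ s₀ : ℕ, ∀ s : ℕ, s₀ ≤ s → p.eval (s : ℚ) = (diffTrdeg δ K η s : ℚ)

/-- `K⟨S⟩`: the smallest differential subfield of `L` containing `K` and `S`. -/
def diffAdjoin {L : Type*} [Field L] {m : ℕ} (δ : Fin m → L → L) (K : Subfield L)
    (S : Set L) : Subfield L :=
  sInf {F : Subfield L | IsDiffSubfield δ F ∧ K ≤ F ∧ S ⊆ F}

/-!
If `K⟨a⟩ = K⟨b⟩`, each `bⱼ` is a rational function over `K` of finitely many derivatives of `a`, so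
for some `h` the field `K(θb : ord θ ≤ s)` lies in `K(θa : ord θ ≤ s + h)` for every `s`; hence
`T_b(s) ≤ T_a(s + h)`, and symmetrically `T_a(s) ≤ T_b(s + k)`. An eventual inequality
`p(s) ≤ q(s + k)` bounds the coefficient of `p` in degree `max (deg p) (deg q)` by that of `q`,
since the shift `X ↦ X + k` does not change top coefficients; the two inequalities therefore
force equal degrees and leading coefficients.
-/

open Filter Function Set

section ThetaApply

variable {L : Type*}

theorem thetaApply_succ {m : ℕ} (δ : Fin (m + 1) → L → L) (e : Fin (m + 1) → ℕ) (x : L) :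
    thetaApply δ e x = (δ 0)^[e 0] (thetaApply (Fin.tail δ) (Fin.tail e) x) := by
  simp [thetaApply, List.ofFn_succ, Fin.tail]

theorem thetaApply_zero {m : ℕ} (δ : Fin m → L → L) (x : L) : thetaApply δ 0 x = x := by
  induction m with
  | zero => simp [thetaApply]
  | succ m ih => rw [thetaApply_succ]; exact ih _

theorem thetaApply_update_succ {m : ℕ} {δ : Fin m → L → L}
    (hcomm : ∀ i j x, δ i (δ j x) = δ j (δ i x)) (e : Fin m → ℕ) (i : Fin m) (x : L) :
    thetaApply δ (update e i (e i + 1)) x = δ i (thetaApply δ e x) := by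
  induction m with
  | zero => exact i.elim0
  | succ m ih =>
    rw [thetaApply_succ, thetaApply_succ]
    rcases Fin.eq_zero_or_eq_succ i with rfl | ⟨j, rfl⟩
    · rw [Fin.tail_update_zero, update_self, iterate_succ_apply']
    · rw [Fin.tail_update_succ, update_of_ne (Fin.succ_ne_zero j).symm,
        show e j.succ = Fin.tail e j from rfl,
        ih (δ := Fin.tail δ) (fun _ _ _ => hcomm _ _ _) (Fin.tail e) j]
      exact Commute.iterate_left (fun x => hcomm 0 j.succ x) (e 0) _

theorem mapsTo_iterate_of_mapsTo_succ {f : L → L} {F : ℕ → Set L}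
    (hf : ∀ t, MapsTo f (F t) (F (t + 1))) (k t : ℕ) : MapsTo f^[k] (F t) (F (t + k)) := by
  induction k with
  | zero => exact mapsTo_id _
  | succ k ih => rw [iterate_succ']; exact (hf _).comp ih

theorem thetaApply_mapsTo {m : ℕ} {δ : Fin m → L → L} {F : ℕ → Set L}
    (hδ : ∀ i t, MapsTo (δ i) (F t) (F (t + 1))) (e : Fin m → ℕ) (t : ℕ) :
    MapsTo (thetaApply δ e) (F t) (F (t + ∑ i, e i)) := by
  induction m generalizing t with
  | zero => simpa [thetaApply] using mapsTo_id (F t)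
  | succ m ih =>
    intro x hx
    rw [thetaApply_succ, Fin.sum_univ_succ, add_comm (e 0), ← add_assoc]
    exact mapsTo_iterate_of_mapsTo_succ (hδ 0) _ _ (ih (fun i => hδ i.succ) (Fin.tail e) t hx)

end ThetaApply

section DerivativesUpTo

variable {L : Type*} {m n : ℕ} (δ : Fin m → L → L) (η : Fin n → L)

def derivativesUpTo (s : ℕ) : Set L :=
  {x : L | ∃ e : Fin m → ℕ, (∑ i, e i) ≤ s ∧ ∃ j : Fin n, x = thetaApply δ e (η j)}

theorem derivativesUpTo_mono {s t : ℕ} (hst : s ≤ t) :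
    derivativesUpTo δ η s ⊆ derivativesUpTo δ η t := by
  rintro x ⟨e, he, j, rfl⟩
  exact ⟨e, he.trans hst, j, rfl⟩

theorem range_subset_derivativesUpTo_zero : range η ⊆ derivativesUpTo δ η 0 := by
  rintro x ⟨j, rfl⟩
  exact ⟨0, by simp, j, (thetaApply_zero δ (η j)).symm⟩

theorem derivativesUpTo_finite (s : ℕ) : (derivativesUpTo δ η s).Finite := by
  have hexp : {e : Fin m → ℕ | ∑ i, e i ≤ s}.Finite :=
    (Set.Finite.pi' fun _ => finite_Iic s).subset fun e he i =>
      (Finset.single_le_sum (fun _ _ => Nat.zero_le _) (Finset.mem_univ i)).trans he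
  refine ((hexp.prod finite_univ).image fun ej => thetaApply δ ej.1 (η ej.2)).subset ?_
  rintro x ⟨e, he, j, rfl⟩
  exact ⟨(e, j), ⟨he, mem_univ j⟩, rfl⟩

theorem mapsTo_derivativesUpTo (hcomm : ∀ i j x, δ i (δ j x) = δ j (δ i x)) (i : Fin m)
    (s : ℕ) : MapsTo (δ i) (derivativesUpTo δ η s) (derivativesUpTo δ η (s + 1)) := by
  rintro x ⟨e, he, j, rfl⟩
  refine ⟨update e i (e i + 1), ?_, j, (thetaApply_update_succ hcomm e i (η j)).symm⟩
  rw [Finset.sum_eq_add_sum_sdiff_singleton_of_mem (Finset.mem_univ i) e] at he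
  rw [Finset.sum_update_of_mem (Finset.mem_univ i)]
  omega

end DerivativesUpTo

section Derivation

variable {L : Type*} [Field L]

def derivationOfLeibniz (d : L → L) (hadd : ∀ x y, d (x + y) = d x + d y)
    (hleib : ∀ x y, d (x * y) = x * d y + d x * y) : Derivation ℤ L L :=
  Derivation.mk' (AddMonoidHom.mk' d hadd).toIntLinearMap fun x y => by
    simp [hleib, smul_eq_mul, mul_comm]

theorem Derivation.mapsTo_adjoin (D : Derivation ℤ L L) {K : Subfield L}
    {F : IntermediateField K L} (hK : ∀ x ∈ K, D x ∈ F) {S : Set L} (hSF : S ⊆ F)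
    (hS : MapsTo D S F) : MapsTo D (IntermediateField.adjoin K S) F := by
  intro x hx
  have hadj : IntermediateField.adjoin K S ≤ F := IntermediateField.adjoin_le_iff.mpr hSF
  induction hx using IntermediateField.adjoin_induction with
  | mem x hx => exact hS hx
  | algebraMap k => exact hK k k.2
  | add x y hx hy hDx hDy => rw [D.map_add]; exact add_mem hDx hDy
  | mul x y hx hy hDx hDy =>
    rw [D.leibniz, smul_eq_mul, smul_eq_mul]
    exact add_mem (mul_mem (hadj hx) hDy) (mul_mem (hadj hy) hDx)
  | inv x hx hDx =>
    rw [D.leibniz_inv, smul_eq_mul]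
    exact mul_mem (neg_mem (pow_mem (inv_mem (hadj hx)) 2)) hDx

end Derivation

/-- `trdegNat` truncates an infinite transcendence degree to `0`, hence the finiteness
hypothesis. -/
theorem trdegNat_le_trdegNat {L : Type*} [Field L] {K : Subfield L}
    {E F : IntermediateField K L} (hEF : E ≤ F) (hF : F.FG) : trdegNat K E ≤ trdegNat K F := by
  have := IntermediateField.essFiniteType_iff.mpr hF
  exact Cardinal.toNat_le_toNat
    (trdeg_le_of_injective (IntermediateField.inclusion hEF)
      (IntermediateField.inclusion_injective hEF))
    (trdeg_lt_aleph0 K F)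

section DifferentialField

variable {L : Type*} [Field L] {m : ℕ} (δ : Fin m → L → L) (K : Subfield L)

theorem subset_diffAdjoin (S : Set L) : S ⊆ diffAdjoin δ K S :=
  fun _ hx => Subfield.mem_sInf.mpr fun _ hF => hF.2.2 hx

variable {n : ℕ} (η : Fin n → L)

noncomputable def adjoinDerivativesUpTo (s : ℕ) : IntermediateField K L :=
  IntermediateField.adjoin K (derivativesUpTo δ η s)

theorem diffTrdeg_eq_trdegNat_adjoinDerivativesUpTo (s : ℕ) :
    diffTrdeg δ K η s = trdegNat K (adjoinDerivativesUpTo δ K η s) := rfl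

theorem adjoinDerivativesUpTo_mono : Monotone (adjoinDerivativesUpTo δ K η) :=
  fun _ _ hst => IntermediateField.adjoin.mono _ _ _ (derivativesUpTo_mono δ η hst)

theorem adjoinDerivativesUpTo_fg (s : ℕ) : (adjoinDerivativesUpTo δ K η s).FG :=
  IntermediateField.fg_adjoin_of_finite (derivativesUpTo_finite δ η s)

variable {δ K}
variable (hadd : ∀ i x y, δ i (x + y) = δ i x + δ i y)
  (hleib : ∀ i x y, δ i (x * y) = x * δ i y + δ i x * y)
  (hcomm : ∀ i j x, δ i (δ j x) = δ j (δ i x)) (hK : IsDiffSubfield δ K)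
include hadd hleib hcomm hK

theorem mapsTo_adjoinDerivativesUpTo (i : Fin m) (s : ℕ) :
    MapsTo (δ i) (adjoinDerivativesUpTo δ K η s) (adjoinDerivativesUpTo δ K η (s + 1)) := by
  have hsub : derivativesUpTo δ η (s + 1) ⊆ adjoinDerivativesUpTo δ K η (s + 1) :=
    IntermediateField.subset_adjoin _ _
  exact (derivationOfLeibniz (δ i) (hadd i) (hleib i)).mapsTo_adjoin
    (fun x hx => IntermediateField.algebraMap_mem _ (⟨δ i x, hK i x hx⟩ : K))
    ((derivativesUpTo_mono δ η s.le_succ).trans hsub)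
    ((mapsTo_derivativesUpTo δ η hcomm i s).mono_right hsub)

theorem exists_mem_adjoinDerivativesUpTo {x : L} (hx : x ∈ diffAdjoin δ K (range η)) :
    ∃ s, x ∈ adjoinDerivativesUpTo δ K η s := by
  set U := ⨆ s, adjoinDerivativesUpTo δ K η s
  have hdir : Directed (· ≤ ·) (adjoinDerivativesUpTo δ K η) :=
    (adjoinDerivativesUpTo_mono δ K η).directed_le
  have hU : ∀ y, y ∈ U ↔ ∃ s, y ∈ adjoinDerivativesUpTo δ K η s :=
    fun y => by rw [← SetLike.mem_coe, IntermediateField.coe_iSup_of_directed hdir, mem_iUnion]; rfl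
  suffices diffAdjoin δ K (range η) ≤ U.toSubfield from (hU x).mp (this hx)
  refine sInf_le ⟨fun i y hy => ?_, fun y hy => ?_, fun y hy => ?_⟩
  · obtain ⟨s, hs⟩ := (hU y).mp hy
    exact (hU _).mpr ⟨s + 1, mapsTo_adjoinDerivativesUpTo η hadd hleib hcomm hK i s hs⟩
  · exact (hU y).mpr ⟨0, IntermediateField.algebraMap_mem _ (⟨y, hy⟩ : K)⟩
  · exact (hU y).mpr ⟨0, IntermediateField.subset_adjoin _ _
      (range_subset_derivativesUpTo_zero δ η hy)⟩

theorem adjoinDerivativesUpTo_le_shift {n' : ℕ} {η' : Fin n' → L} {h : ℕ}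
    (hη' : range η' ⊆ adjoinDerivativesUpTo δ K η h) (s : ℕ) :
    adjoinDerivativesUpTo δ K η' s ≤ adjoinDerivativesUpTo δ K η (h + s) := by
  rw [adjoinDerivativesUpTo, IntermediateField.adjoin_le_iff]
  rintro x ⟨e, he, j, rfl⟩
  have hθ := thetaApply_mapsTo (F := fun t => (adjoinDerivativesUpTo δ K η t : Set L))
    (mapsTo_adjoinDerivativesUpTo η hadd hleib hcomm hK) e h (hη' ⟨j, rfl⟩)
  exact adjoinDerivativesUpTo_mono δ K η (Nat.add_le_add_left he h) hθ

theorem exists_diffTrdeg_le_shift {n' : ℕ} {η' : Fin n' → L}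
    (hη' : range η' ⊆ diffAdjoin δ K (range η)) :
    ∃ h, ∀ s, diffTrdeg δ K η' s ≤ diffTrdeg δ K η (s + h) := by
  choose t ht using fun j => exists_mem_adjoinDerivativesUpTo η hadd hleib hcomm hK (hη' ⟨j, rfl⟩)
  obtain ⟨h, hh⟩ := Finite.exists_le t
  refine ⟨h, fun s => ?_⟩
  rw [diffTrdeg_eq_trdegNat_adjoinDerivativesUpTo, diffTrdeg_eq_trdegNat_adjoinDerivativesUpTo,
    add_comm]
  exact trdegNat_le_trdegNat
    (adjoinDerivativesUpTo_le_shift η hadd hleib hcomm hK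
      (range_subset_iff.mpr fun j => adjoinDerivativesUpTo_mono δ K η (hh j) (ht j)) s)
    (adjoinDerivativesUpTo_fg δ K η _)

end DifferentialField

namespace Polynomial

theorem coeff_taylor_of_natDegree_le {R : Type*} [CommSemiring R] {f : R[X]} {D : ℕ}
    (hD : f.natDegree ≤ D) (r : R) : (taylor r f).coeff D = f.coeff D := by
  rcases hD.lt_or_eq with hlt | rfl
  · rw [coeff_eq_zero_of_natDegree_lt hlt,
      coeff_eq_zero_of_natDegree_lt (by rwa [natDegree_taylor])]
  · exact coeff_taylor_natDegree r f

theorem degree_eq_and_leadingCoeff_eq_of_coeff_max_natDegree_eq {R : Type*} [Semiring R]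
    {p q : R[X]}
    (h : p.coeff (max p.natDegree q.natDegree) = q.coeff (max p.natDegree q.natDegree)) :
    p.degree = q.degree ∧ p.leadingCoeff = q.leadingCoeff := by
  wlog hle : p.natDegree ≤ q.natDegree generalizing p q
  · exact (this (by rwa [max_comm, eq_comm]) (le_of_not_ge hle)).imp Eq.symm Eq.symm
  rw [max_eq_right hle] at h
  rcases eq_or_ne q 0 with rfl | hq
  · rw [natDegree_zero, nonpos_iff_eq_zero] at hle
    rw [natDegree_zero, coeff_zero] at h
    rw [eq_C_of_natDegree_eq_zero hle, h, C_0]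
    exact ⟨rfl, rfl⟩
  · have hlc : p.coeff q.natDegree ≠ 0 := h ▸ leadingCoeff_ne_zero.mpr hq
    have hdeg : p.natDegree = q.natDegree := le_antisymm hle (le_natDegree_of_ne_zero hlc)
    have hp : p ≠ 0 := fun hp => hlc (by simp [hp])
    refine ⟨by rw [degree_eq_natDegree hp, degree_eq_natDegree hq, hdeg], ?_⟩
    rw [leadingCoeff, hdeg, h, leadingCoeff]

variable {𝕜 : Type*} [NormedField 𝕜] [LinearOrder 𝕜] [IsStrictOrderedRing 𝕜] [OrderTopology 𝕜]
  [Archimedean 𝕜]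

theorem leadingCoeff_nonneg_of_eventually_nonneg {r : 𝕜[X]}
    (h : ∀ᶠ s : ℕ in atTop, 0 ≤ r.eval (s : 𝕜)) : 0 ≤ r.leadingCoeff := by
  by_contra! hneg
  rcases le_or_gt r.degree 0 with hdeg | hdeg
  · rw [eq_C_of_degree_le_zero hdeg, leadingCoeff_C] at hneg
    obtain ⟨s, hs⟩ := h.exists
    rw [eq_C_of_degree_le_zero hdeg, eval_C] at hs
    exact hs.not_gt hneg
  · have hbot := (r.tendsto_atBot_of_leadingCoeff_nonpos hdeg hneg.le).comp
      tendsto_natCast_atTop_atTop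
    obtain ⟨s, hs, hlt⟩ := (h.and (hbot.eventually_lt_atBot 0)).exists
    exact hs.not_gt hlt

theorem coeff_le_coeff_of_eventually_le {f g : 𝕜[X]} {D : ℕ} (hf : f.natDegree ≤ D)
    (hg : g.natDegree ≤ D) (h : ∀ᶠ s : ℕ in atTop, f.eval (s : 𝕜) ≤ g.eval (s : 𝕜)) :
    f.coeff D ≤ g.coeff D := by
  have hnonneg : 0 ≤ (g - f).leadingCoeff :=
    leadingCoeff_nonneg_of_eventually_nonneg (h.mono fun s hs => by simpa using hs)
  rcases ((natDegree_sub_le _ _).trans (max_le hg hf)).lt_or_eq with hlt | hD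
  · have hcoeff := coeff_eq_zero_of_natDegree_lt hlt
    rw [coeff_sub, sub_eq_zero] at hcoeff
    exact hcoeff.ge
  · rwa [leadingCoeff, hD, coeff_sub, sub_nonneg] at hnonneg

theorem coeff_le_coeff_of_eventually_le_shift {p q : 𝕜[X]} {D k : ℕ} (hp : p.natDegree ≤ D)
    (hq : q.natDegree ≤ D) (h : ∀ᶠ s : ℕ in atTop, p.eval (s : 𝕜) ≤ q.eval ((s : 𝕜) + k)) :
    p.coeff D ≤ q.coeff D := by
  rw [← coeff_taylor_of_natDegree_le hq (k : 𝕜)]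
  exact coeff_le_coeff_of_eventually_le hp (by rwa [natDegree_taylor])
    (by simpa only [taylor_eval] using h)

theorem degree_eq_and_leadingCoeff_eq_of_eventually_le_shift {p q : 𝕜[X]} {h k : ℕ}
    (hpq : ∀ᶠ s : ℕ in atTop, p.eval (s : 𝕜) ≤ q.eval ((s : 𝕜) + k))
    (hqp : ∀ᶠ s : ℕ in atTop, q.eval (s : 𝕜) ≤ p.eval ((s : 𝕜) + h)) :
    p.degree = q.degree ∧ p.leadingCoeff = q.leadingCoeff :=
  degree_eq_and_leadingCoeff_eq_of_coeff_max_natDegree_eq <| le_antisymm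
    (coeff_le_coeff_of_eventually_le_shift (le_max_left _ _) (le_max_right _ _) hpq)
    (coeff_le_coeff_of_eventually_le_shift (le_max_right _ _) (le_max_left _ _) hqp)

end Polynomial

theorem IsKolchinPoly.eventually_le_shift {L : Type*} [Field L] {m n n' : ℕ}
    {δ : Fin m → L → L} {K : Subfield L} {η : Fin n → L} {η' : Fin n' → L} {p q : ℚ[X]} {k : ℕ}
    (hp : IsKolchinPoly δ K η p) (hq : IsKolchinPoly δ K η' q)
    (hle : ∀ s, diffTrdeg δ K η s ≤ diffTrdeg δ K η' (s + k)) :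
    ∀ᶠ s : ℕ in atTop, p.eval (s : ℚ) ≤ q.eval ((s : ℚ) + k) := by
  obtain ⟨s₀, hs₀⟩ := hp
  obtain ⟨t₀, ht₀⟩ := hq
  filter_upwards [eventually_ge_atTop (max s₀ t₀)] with s hs
  have hqs := ht₀ (s + k) (by omega)
  push_cast at hqs
  rw [hs₀ s (le_of_max_le_left hs), hqs]
  exact_mod_cast hle s

theorem type_and_typical_dimension_birational_invariant_general
    {L : Type*} [Field L] {m : ℕ}
    (δ : Fin m → L → L)
    (hadd : ∀ i : Fin m, ∀ x y : L, δ i (x + y) = δ i x + δ i y)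
    (hleib : ∀ i : Fin m, ∀ x y : L, δ i (x * y) = x * δ i y + δ i x * y)
    (hcomm : ∀ i j : Fin m, ∀ x : L, δ i (δ j x) = δ j (δ i x))
    (K : Subfield L) (hK : IsDiffSubfield δ K)
    {n₁ n₂ : ℕ} (a : Fin n₁ → L) (b : Fin n₂ → L)
    (hgen : diffAdjoin δ K (Set.range a) = diffAdjoin δ K (Set.range b))
    (p q : ℚ[X])
    (hp : IsKolchinPoly δ K a p)
    (hq : IsKolchinPoly δ K b q) :
    p.degree = q.degree ∧ p.leadingCoeff = q.leadingCoeff := by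
  obtain ⟨k, hk⟩ := exists_diffTrdeg_le_shift b hadd hleib hcomm hK
    (hgen ▸ subset_diffAdjoin δ K (range a))
  obtain ⟨h, hh⟩ := exists_diffTrdeg_le_shift a hadd hleib hcomm hK
    (hgen ▸ subset_diffAdjoin δ K (range b))
  exact degree_eq_and_leadingCoeff_eq_of_eventually_le_shift
    (hp.eventually_le_shift hq hk) (hq.eventually_le_shift hp hh)

/-- Differential type and typical differential dimension are differential birational invariants:
if `K⟨a⟩ = K⟨b⟩` then Kolchin polynomials of `a` and `b` over `K` have the same degree and the
same leading coefficient. -/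
theorem type_and_typical_dimension_birational_invariant
    {L : Type*} [Field L] [CharZero L] {m : ℕ} (hm : 1 ≤ m)
    (δ : Fin m → L → L)
    (hadd : ∀ i : Fin m, ∀ x y : L, δ i (x + y) = δ i x + δ i y)
    (hleib : ∀ i : Fin m, ∀ x y : L, δ i (x * y) = x * δ i y + δ i x * y)
    (hcomm : ∀ i j : Fin m, ∀ x : L, δ i (δ j x) = δ j (δ i x))
    (K : Subfield L) (hK : IsDiffSubfield δ K)
    {n₁ n₂ : ℕ} (a : Fin n₁ → L) (b : Fin n₂ → L)
    (hgen : diffAdjoin δ K (Set.range a) = diffAdjoin δ K (Set.range b))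
    (p q : ℚ[X])
    (hp : IsKolchinPoly δ K a p)
    (hq : IsKolchinPoly δ K b q) :
    p.degree = q.degree ∧ p.leadingCoeff = q.leadingCoeff :=
  type_and_typical_dimension_birational_invariant_general δ hadd hleib hcomm K hK a b hgen p q hp hq
end

section
/- Let K be a field equipped with two derivations δ₁ and δ₂, let C₁ = {x ∈ K : δ₁(x) = 0} and C₂ = {x ∈ K : δ₂(x) = 0} be the rings of constants, and let G = { M(u₁,u₂,u) : δ₁(u₁) = 0, δ₂(u₂) = 0 } ≤ GL₃(K). Then the commutator subgroup of G equals { M(0,0,c) : c ∈ S }, where S is the subring of K generated by C₁ ∪ C₂. -/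
open Matrix

/-- `M r₁ r₂ r` is the 3×3 upper unitriangular matrix with (1,2)-entry `r₁`, (2,3)-entry `r₂`
and (1,3)-entry `r`. -/
def unitri {R : Type*} [CommRing R] (r₁ r₂ r : R) : Matrix (Fin 3) (Fin 3) R :=
  !![1, r₁, r; 0, 1, r₂; 0, 0, 1]

theorem unitri_det {R : Type*} [CommRing R] (r₁ r₂ r : R) : (unitri r₁ r₂ r).det = 1 := by
  simp [unitri, Matrix.det_fin_three, Matrix.vecHead, Matrix.vecTail]

/-- `M r₁ r₂ r` as an element of `GL₃(R)`. -/
noncomputable def unitriGL {R : Type*} [CommRing R] (r₁ r₂ r : R) :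
    GL (Fin 3) R :=
  Matrix.nonsingInvUnit (unitri r₁ r₂ r) (by rw [unitri_det]; exact isUnit_one)


/-!
The commutator of `M(a₁,a₂,a)` and `M(b₁,b₂,b)` is `M(0,0,a₁b₂ - b₁a₂)`, and every product `ab`
with `δ₁ a = 0`, `δ₂ b = 0` arises as the commutator of `M(a,0,0)` and `M(0,b,0)`. Hence the
commutator subgroup is `{M(0,0,c)}` with `c` ranging over the additive group generated by the
products `C₁ C₂`. By the Leibniz rule, `C₁` and `C₂` are multiplicative monoids, and for two
submonoids of a commutative ring the additive group generated by their products is the subring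
generated by their union.
-/

open scoped Pointwise

section Unitriangular

variable {R : Type*} [CommRing R]

theorem unitri_mul (a₁ a₂ a b₁ b₂ b : R) :
    unitri a₁ a₂ a * unitri b₁ b₂ b = unitri (a₁ + b₁) (a₂ + b₂) (a + b + a₁ * b₂) := by
  simp only [unitri, Matrix.mul_fin_three]
  ring_nf

theorem unitriGL_mul (a₁ a₂ a b₁ b₂ b : R) :
    unitriGL a₁ a₂ a * unitriGL b₁ b₂ b = unitriGL (a₁ + b₁) (a₂ + b₂) (a + b + a₁ * b₂) :=
  Units.ext (unitri_mul a₁ a₂ a b₁ b₂ b)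

theorem unitriGL_zero : (unitriGL 0 0 0 : GL (Fin 3) R) = 1 := by
  ext i j
  fin_cases i <;> fin_cases j <;> rfl

theorem unitriGL_inv (a₁ a₂ a : R) :
    (unitriGL a₁ a₂ a)⁻¹ = unitriGL (-a₁) (-a₂) (a₁ * a₂ - a) := by
  refine (eq_inv_of_mul_eq_one_left ?_).symm
  rw [unitriGL_mul, ← unitriGL_zero]
  congr 1 <;> ring

open scoped commutatorElement in
theorem unitriGL_commutator (a₁ a₂ a b₁ b₂ b : R) :
    ⁅unitriGL a₁ a₂ a, unitriGL b₁ b₂ b⁆ = unitriGL 0 0 (a₁ * b₂ - b₁ * a₂) := by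
  rw [commutatorElement_def, unitriGL_inv, unitriGL_inv, unitriGL_mul, unitriGL_mul,
    unitriGL_mul]
  congr 1 <;> ring

theorem unitriGL_zero_zero_mul (c d : R) :
    unitriGL 0 0 c * unitriGL 0 0 d = unitriGL 0 0 (c + d) := by
  rw [unitriGL_mul]
  congr 1 <;> ring

theorem unitriGL_zero_zero_inv (c : R) : (unitriGL 0 0 c)⁻¹ = unitriGL 0 0 (-c) := by
  rw [unitriGL_inv]
  congr 1 <;> ring

noncomputable def centralUnitri (A : AddSubgroup R) : Subgroup (GL (Fin 3) R) where
  carrier := {g | ∃ c ∈ A, g = unitriGL 0 0 c}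
  one_mem' := ⟨0, zero_mem A, unitriGL_zero.symm⟩
  mul_mem' := by
    rintro _ _ ⟨c, hc, rfl⟩ ⟨d, hd, rfl⟩
    exact ⟨c + d, add_mem hc hd, unitriGL_zero_zero_mul c d⟩
  inv_mem' := by
    rintro _ ⟨c, hc, rfl⟩
    exact ⟨-c, neg_mem hc, unitriGL_zero_zero_inv c⟩

open scoped commutatorElement in
theorem commutator_eq_centralUnitri {A₁ A₂ : Set R} (h₁ : (0 : R) ∈ A₁) (h₂ : (0 : R) ∈ A₂)
    {H : Subgroup (GL (Fin 3) R)}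
    (hH : (H : Set (GL (Fin 3) R)) =
      {g | ∃ u₁ u₂ u : R, u₁ ∈ A₁ ∧ u₂ ∈ A₂ ∧ g = unitriGL u₁ u₂ u}) :
    ⁅H, H⁆ = centralUnitri (AddSubgroup.closure (A₁ * A₂)) := by
  have mem_H {u₁ u₂ : R} (hu₁ : u₁ ∈ A₁) (hu₂ : u₂ ∈ A₂) (u : R) : unitriGL u₁ u₂ u ∈ H := by
    rw [← SetLike.mem_coe, hH]
    exact ⟨u₁, u₂, u, hu₁, hu₂, rfl⟩
  apply le_antisymm
  · rw [Subgroup.commutator_le]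
    intro g hg h hh
    rw [← SetLike.mem_coe, hH] at hg hh
    obtain ⟨a₁, a₂, a, ha₁, ha₂, rfl⟩ := hg
    obtain ⟨b₁, b₂, b, hb₁, hb₂, rfl⟩ := hh
    refine ⟨a₁ * b₂ - b₁ * a₂, sub_mem ?_ ?_, unitriGL_commutator ..⟩ <;>
      exact AddSubgroup.subset_closure (Set.mul_mem_mul ‹_› ‹_›)
  · rintro _ ⟨c, hc, rfl⟩
    induction hc using AddSubgroup.closure_induction with
    | mem _ hx =>
      obtain ⟨a, ha, b, hb, rfl⟩ := hx
      have hab : unitriGL 0 0 (a * b) = ⁅unitriGL a 0 0, unitriGL 0 b 0⁆ := by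
        rw [unitriGL_commutator]
        congr 1
        ring
      rw [hab]
      exact Subgroup.commutator_mem_commutator (mem_H ha h₂ 0) (mem_H h₁ hb 0)
    | zero => exact unitriGL_zero (R := R) ▸ one_mem _
    | add c d _ _ hc hd => exact unitriGL_zero_zero_mul c d ▸ mul_mem hc hd
    | neg c _ hc => exact unitriGL_zero_zero_inv c ▸ inv_mem hc

end Unitriangular

theorem Subring.toAddSubgroup_closure_union {R : Type*} [CommRing R] (S T : Submonoid R) :
    (Subring.closure (S ∪ T : Set R)).toAddSubgroup =
      AddSubgroup.closure ((S : Set R) * (T : Set R)) := by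
  ext x
  rw [Subring.mem_toAddSubgroup, Subring.mem_closure_iff, Submonoid.closure_union,
    Submonoid.closure_eq, Submonoid.closure_eq, Submonoid.coe_sup]

section Leibniz

variable {R : Type*} [Ring R]

theorem leibniz_map_zero {δ : R → R} (hδ : ∀ x y, δ (x * y) = x * δ y + δ x * y) : δ 0 = 0 := by
  simpa using hδ 0 0

def leibnizConstants (δ : R → R) (hδ : ∀ x y, δ (x * y) = x * δ y + δ x * y) : Submonoid R where
  carrier := {x | δ x = 0}
  one_mem' := by simpa using hδ 1 1
  mul_mem' {x y} (hx : δ x = 0) (hy : δ y = 0) := by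
    show δ (x * y) = 0
    rw [hδ, hx, hy, mul_zero, zero_mul, add_zero]

end Leibniz

theorem diffUnitri_commutator_subgroup_general {K : Type*} [Field K] (δ₁ δ₂ : K → K)
    (hleib₁ : ∀ x y : K, δ₁ (x * y) = x * δ₁ y + δ₁ x * y)
    (hleib₂ : ∀ x y : K, δ₂ (x * y) = x * δ₂ y + δ₂ x * y)
    (H : Subgroup (GL (Fin 3) K))
    (hH : (H : Set (GL (Fin 3) K)) =
      {g | ∃ u₁ u₂ u : K, δ₁ u₁ = 0 ∧ δ₂ u₂ = 0 ∧ g = unitriGL u₁ u₂ u}) :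
    ((⁅H, H⁆ : Subgroup (GL (Fin 3) K)) : Set (GL (Fin 3) K)) =
      {g | ∃ c ∈ Subring.closure ({x : K | δ₁ x = 0} ∪ {x : K | δ₂ x = 0}),
        g = unitriGL 0 0 c} := by
  let C₁ := leibnizConstants δ₁ hleib₁
  let C₂ := leibnizConstants δ₂ hleib₂
  rw [commutator_eq_centralUnitri (A₁ := C₁) (A₂ := C₂) (leibniz_map_zero hleib₁)
    (leibniz_map_zero hleib₂) hH, ← Subring.toAddSubgroup_closure_union C₁ C₂]
  rfl

/-- The commutator subgroup of `G = {M(u₁,u₂,u) : δ₁ u₁ = 0, δ₂ u₂ = 0} ≤ GL₃(K)` equals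
`{M(0,0,c) : c ∈ S}`, where `S` is the subring of `K` generated by the union of the constants
of `δ₁` and of `δ₂`. -/
theorem diffUnitri_commutator_subgroup {K : Type*} [Field K] (δ₁ δ₂ : K → K)
    (hadd₁ : ∀ x y : K, δ₁ (x + y) = δ₁ x + δ₁ y)
    (hadd₂ : ∀ x y : K, δ₂ (x + y) = δ₂ x + δ₂ y)
    (hleib₁ : ∀ x y : K, δ₁ (x * y) = x * δ₁ y + δ₁ x * y)
    (hleib₂ : ∀ x y : K, δ₂ (x * y) = x * δ₂ y + δ₂ x * y)
    (H : Subgroup (GL (Fin 3) K))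
    (hH : (H : Set (GL (Fin 3) K)) =
      {g | ∃ u₁ u₂ u : K, δ₁ u₁ = 0 ∧ δ₂ u₂ = 0 ∧ g = unitriGL u₁ u₂ u}) :
    ((⁅H, H⁆ : Subgroup (GL (Fin 3) K)) : Set (GL (Fin 3) K)) =
      {g | ∃ c ∈ Subring.closure ({x : K | δ₁ x = 0} ∪ {x : K | δ₂ x = 0}),
        g = unitriGL 0 0 c} :=
  diffUnitri_commutator_subgroup_general δ₁ δ₂ hleib₁ hleib₂ H hH
end
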